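/- Let A be a finite set with a conservative minority operation f, and let A₁,…,Aₙ ⊆ A be subsets such that each subalgebra (A_i;f) is subdirectly irreducible with monolith μ_i whose nontrivial block is a two-element set {a_i, b_i}. Suppose R ⊆ A₁ × ⋯ × Aₙ is invariant under the coordinatewise application of f and satisfies: (1) R is functional, and (2) there are bijections ℓ_i : {a_i,b_i} → {0,1} such that R ∩ ({a₁,b₁} × ⋯ × {aₙ,bₙ}) = {(c₁,…,cₙ) : c_i ∈ {a_i,b_i} for all i and ℓ₁(c₁) + ⋯ + ℓₙ(cₙ) ≡ 1 (mod 2)}. Then every tuple (c₁,…,cₙ) ∈ R satisfies: if c_i ∈ {a_i, b_i} for some i, then c_j ∈ {a_j, b_j} for every j ∈ {1,…,n}. -/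

import Mathlib

/-- `f` is a Maltsev operation. -/
def IsMaltsevOp {α : Type*} (f : α → α → α → α) : Prop :=
  ∀ x y : α, f x x y = y ∧ f y x x = y

/-- `f` is a minority operation. -/
def IsMinorityOp {α : Type*} (f : α → α → α → α) : Prop :=
  ∀ x y : α, f x x y = y ∧ f x y x = y ∧ f y x x = y

/-- `f` is conservative. -/
def IsConservativeOp {α : Type*} (f : α → α → α → α) : Prop :=
  ∀ x y z : α, f x y z = x ∨ f x y z = y ∨ f x y z = z

/-- `f` preserves the binary relation `θ`. -/
def PreservesRel {α : Type*} (f : α → α → α → α) (θ : α → α → Prop) : Prop :=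
  ∀ a₁ b₁ a₂ b₂ a₃ b₃ : α, θ a₁ b₁ → θ a₂ b₂ → θ a₃ b₃ →
    θ (f a₁ a₂ a₃) (f b₁ b₂ b₃)

/-- A congruence of the algebra `(α; f)`. -/
def IsCong {α : Type*} (f : α → α → α → α) (θ : α → α → Prop) : Prop :=
  Equivalence θ ∧ PreservesRel f θ

/-- A block congruence: a congruence with at most one nontrivial class. -/
def IsBlockCong {α : Type*} (f : α → α → α → α) (θ : α → α → Prop) : Prop :=
  IsCong f θ ∧ ∀ a b c d : α, θ a b → a ≠ b → θ c d → c ≠ d → θ a c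

/-- A relation is nontrivial if it relates two distinct elements. -/
def NontrivialRel {α : Type*} (θ : α → α → Prop) : Prop :=
  ∃ a b, θ a b ∧ a ≠ b

/-- Containment of binary relations. -/
def RelLE {α : Type*} (θ₁ θ₂ : α → α → Prop) : Prop :=
  ∀ x y, θ₁ x y → θ₂ x y

/-- An atomic congruence: a nontrivial congruence such that every nontrivial
congruence contained in it equals it. -/
def IsAtomicCong {α : Type*} (f : α → α → α → α) (θ : α → α → Prop) : Prop :=
  IsCong f θ ∧ NontrivialRel θ ∧
    ∀ θ' : α → α → Prop, IsCong f θ' → NontrivialRel θ' → RelLE θ' θ →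
      ∀ x y, θ' x y ↔ θ x y

/-- `(α; f)` is subdirectly irreducible: it has exactly one atomic congruence. -/
def IsSubdirectlyIrred {α : Type*} (f : α → α → α → α) : Prop :=
  ∃ θ : α → α → Prop, IsAtomicCong f θ ∧
    ∀ θ' : α → α → Prop, IsAtomicCong f θ' → ∀ x y, θ' x y ↔ θ x y
/-- An equivalence relation on the subset `B` preserved by `f`, i.e. a
congruence of the subalgebra `(B; f)`. -/
def IsCongOn {α : Type*} (f : α → α → α → α) (B : Set α)
    (θ : α → α → Prop) : Prop :=
  (∀ x y, θ x y → x ∈ B ∧ y ∈ B) ∧ (∀ x ∈ B, θ x x) ∧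
    (∀ x y, θ x y → θ y x) ∧ (∀ x y z, θ x y → θ y z → θ x z) ∧
    PreservesRel f θ

/-- An atomic congruence of the subalgebra `(B; f)`. -/
def IsAtomicCongOn {α : Type*} (f : α → α → α → α) (B : Set α)
    (θ : α → α → Prop) : Prop :=
  IsCongOn f B θ ∧ NontrivialRel θ ∧
    ∀ θ' : α → α → Prop, IsCongOn f B θ' → NontrivialRel θ' → RelLE θ' θ →
      ∀ x y, θ' x y ↔ θ x y

/-- The subalgebra `(B; f)` is subdirectly irreducible. -/
def IsSIOn {α : Type*} (f : α → α → α → α) (B : Set α) : Prop :=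
  ∃ μ : α → α → Prop, IsAtomicCongOn f B μ ∧
    ∀ μ' : α → α → Prop, IsAtomicCongOn f B μ' → ∀ x y, μ' x y ↔ μ x y

/-- `f` preserves the `n`-ary relation `R`. -/
def PreservesSet {α : Type*} (f : α → α → α → α) {n : ℕ}
    (R : Set (Fin n → α)) : Prop :=
  ∀ t₁ t₂ t₃, t₁ ∈ R → t₂ ∈ R → t₃ ∈ R →
    (fun i => f (t₁ i) (t₂ i) (t₃ i)) ∈ R

/- Let `t ∈ R` meet the block of coordinate `k`, and let `j ≠ k`. The parity
description gives two tuples `s, s' ∈ R` inside the blocks that differ exactly at `j` and `k`.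
Applying `x ↦ f(x, s, s')` to `t` changes it at `k` (the minority law swaps `s k` and `s' k`) and
nowhere outside `{j, k}`; by functionality it must then also change at `j`, so its `j`-th entry
lies in `{s j, s' j}`. Applying the map once more restores `t` off `j`, hence everywhere, and
keeps the `j`-th entry in `{s j, s' j} = {a j, b j}`. -/

open Function

def IsFunctionalRel {ι α : Type*} (R : Set (ι → α)) : Prop :=
  ∀ t ∈ R, ∀ t' ∈ R, ∀ i : ι, (∀ j, j ≠ i → t j = t' j) → t = t'

theorem ZMod.two_eq_add_one_of_ne : ∀ {x y : ZMod 2}, x ≠ y → x = y + 1 := by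
  decide

theorem sum_apply_update_of_ne {ι α : Type*} [Fintype ι] [DecidableEq ι]
    (ℓ : ι → α → ZMod 2) (g : ι → α) {k : ι} {v : α} (h : ℓ k v ≠ ℓ k (g k)) :
    ∑ i, ℓ i (update g k v i) = ∑ i, ℓ i (g i) + 1 := by
  rw [← Finset.add_sum_erase _ _ (Finset.mem_univ k),
    ← Finset.add_sum_erase _ _ (Finset.mem_univ k), update_self,
    Finset.sum_congr rfl fun i hi => by rw [update_of_ne (Finset.ne_of_mem_erase hi)],
    ZMod.two_eq_add_one_of_ne h]
  ring

section Minority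

variable {α : Type*} {f : α → α → α → α}

theorem IsMinorityOp.apply_mem_pair (hmin : IsMinorityOp f) {x p q : α} (hx : x = p ∨ x = q) :
    f x p q = p ∨ f x p q = q := by
  rcases hx with rfl | rfl
  · exact Or.inr (hmin x q).1
  · exact Or.inl (hmin x p).2.1

theorem IsMinorityOp.apply_ne (hmin : IsMinorityOp f) {x p q : α} (hpq : p ≠ q)
    (hx : x = p ∨ x = q) : f x p q ≠ x := by
  rcases hx with rfl | rfl
  · rw [(hmin x q).1]; exact hpq.symm
  · rw [(hmin x p).2.1]; exact hpq

theorem IsMinorityOp.apply_apply (hmin : IsMinorityOp f) {x p q : α} (hx : x = p ∨ x = q) :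
    f (f x p q) p q = x := by
  rcases hx with rfl | rfl
  · rw [(hmin x q).1, (hmin q x).2.1]
  · rw [(hmin x p).2.1, (hmin p x).1]

end Minority

theorem update_mem_blocks {ι α : Type*} [DecidableEq ι] {a b g : ι → α}
    (hg : ∀ i, g i = a i ∨ g i = b i) {k : ι} {v : α} (hv : v = a k ∨ v = b k) :
    ∀ i, update g k v i = a i ∨ update g k v i = b i := by
  intro i
  rcases eq_or_ne i k with rfl | hik
  · simpa only [update_self] using hv
  · simpa only [update_of_ne hik] using hg i

theorem exists_mem_blocks_differing_at {ι α : Type*} [Fintype ι] [DecidableEq ι]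
    {R : Set (ι → α)} {a b : ι → α} {ℓ : ι → α → ZMod 2} (hℓ : ∀ i, ℓ i (a i) ≠ ℓ i (b i))
    (hlin : ∀ t : ι → α, (∀ i, t i = a i ∨ t i = b i) → (t ∈ R ↔ (∑ i, ℓ i (t i)) = 1))
    {j k : ι} (hjk : j ≠ k) :
    ∃ s ∈ R, ∃ s' ∈ R, s j = a j ∧ s' j = b j ∧ (∀ i, i ≠ j → i ≠ k → s i = s' i) ∧
      ((s k = a k ∧ s' k = b k) ∨ (s k = b k ∧ s' k = a k)) := by
  have ha : ∀ i, a i = a i ∨ a i = b i := fun i => Or.inl rfl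
  by_cases hσ : ∑ i, ℓ i (a i) = 1
  · set s' := update (update a j (b j)) k (b k)
    have hs' : ∀ i, s' i = a i ∨ s' i = b i :=
      update_mem_blocks (update_mem_blocks ha (Or.inr rfl)) (Or.inr rfl)
    refine ⟨a, (hlin a ha).2 hσ, s', (hlin s' hs').2 ?_, rfl, ?_, fun i hij hik => ?_,
      Or.inl ⟨rfl, by simp [s']⟩⟩
    · rw [sum_apply_update_of_ne ℓ _ (by simpa [hjk.symm] using (hℓ k).symm),
        sum_apply_update_of_ne ℓ _ (by simpa using (hℓ j).symm), hσ]
      decide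
    · simp [s', hjk]
    · simp [s', hij, hik]
  · have hs : ∀ i, update a k (b k) i = a i ∨ update a k (b k) i = b i :=
      update_mem_blocks ha (Or.inr rfl)
    have hs' : ∀ i, update a j (b j) i = a i ∨ update a j (b j) i = b i :=
      update_mem_blocks ha (Or.inr rfl)
    have hσ' : ∑ i, ℓ i (a i) + 1 = 1 := by
      revert hσ; generalize ∑ i, ℓ i (a i) = σ; decide +revert
    refine ⟨_, (hlin _ hs).2 ?_, _, (hlin _ hs').2 ?_, by simp [hjk], by simp,
      fun i hij hik => by simp [hij, hik], Or.inr ⟨by simp, by simp [hjk.symm]⟩⟩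
    · rwa [sum_apply_update_of_ne ℓ _ (hℓ k).symm]
    · rwa [sum_apply_update_of_ne ℓ _ (hℓ j).symm]

section Functional

variable {α : Type*} {f : α → α → α → α} {n : ℕ} {R : Set (Fin n → α)}

theorem apply_mem_pair_of_apply_mem_pair (hcons : IsConservativeOp f) (hmin : IsMinorityOp f)
    (hinv : PreservesSet f R) (hfun : IsFunctionalRel R) {t s s' : Fin n → α} (ht : t ∈ R)
    (hs : s ∈ R) (hs' : s' ∈ R) {j k : Fin n} (hss' : ∀ i, i ≠ j → i ≠ k → s i = s' i)
    (hk : s k ≠ s' k) (htk : t k = s k ∨ t k = s' k) :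
    t j = s j ∨ t j = s' j := by
  set τ : (Fin n → α) → Fin n → α := fun x i => f (x i) (s i) (s' i)
  have hτR : ∀ x ∈ R, τ x ∈ R := fun x hx => hinv x s s' hx hs hs'
  have hτ_fix : ∀ x i, i ≠ j → i ≠ k → τ x i = x i := fun x i hij hik => by
    simp only [τ, hss' i hij hik]; exact (hmin _ _).2.2
  have hτk : τ t k ≠ t k := hmin.apply_ne hk htk
  have hτj : τ t j = s j ∨ τ t j = s' j := by
    rcases hcons (t j) (s j) (s' j) with h | h | h
    · refine absurd (hfun _ (hτR t ht) _ ht k fun i hik => ?_) fun h' => hτk (congrFun h' k)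
      rcases eq_or_ne i j with rfl | hij
      · exact h
      · exact hτ_fix t i hij hik
    · exact Or.inl h
    · exact Or.inr h
  have hττ : τ (τ t) = t := hfun _ (hτR _ (hτR t ht)) t ht j fun i hij => by
    rcases eq_or_ne i k with rfl | hik
    · exact hmin.apply_apply htk
    · rw [hτ_fix _ i hij hik, hτ_fix t i hij hik]
  rw [← hττ]
  exact hmin.apply_mem_pair hτj

end Functional

theorem stmt_16_general {α : Type*} (f : α → α → α → α)
    (hcons : IsConservativeOp f) (hmin : IsMinorityOp f)
    (n : ℕ) (a b : Fin n → α)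
    (hab : ∀ i, a i ≠ b i)
    (R : Set (Fin n → α))
    (hinv : PreservesSet f R)
    (hfun : ∀ t ∈ R, ∀ t' ∈ R, ∀ i : Fin n,
        (∀ j, j ≠ i → t j = t' j) → t = t')
    (ℓ : Fin n → α → ZMod 2)
    (hℓ : ∀ i, ℓ i (a i) ≠ ℓ i (b i))
    (hlin : ∀ t : Fin n → α, (∀ i, t i = a i ∨ t i = b i) →
        (t ∈ R ↔ (∑ i, ℓ i (t i)) = 1)) :
    ∀ t ∈ R, (∃ i, t i = a i ∨ t i = b i) →
      ∀ j : Fin n, t j = a j ∨ t j = b j := by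
  rintro t ht ⟨k, hk⟩ j
  rcases eq_or_ne j k with rfl | hjk
  · exact hk
  obtain ⟨s, hs, s', hs', hsj, hs'j, hss', hsk⟩ := exists_mem_blocks_differing_at hℓ hlin hjk
  have hk' : s k ≠ s' k ∧ (t k = s k ∨ t k = s' k) := by
    rcases hsk with ⟨h, h'⟩ | ⟨h, h'⟩ <;> rw [h, h']
    · exact ⟨hab k, hk⟩
    · exact ⟨(hab k).symm, hk.symm⟩
  rw [← hsj, ← hs'j]
  exact apply_mem_pair_of_apply_mem_pair hcons hmin hinv hfun ht hs hs' hss' hk'.1 hk'.2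

/-- Tuples of a functional invariant relation whose restriction to the product
of the (two-element) monolith blocks is the solution set of the `ℤ₂`-linear
equation `x₁ + ⋯ + xₙ = 1` do not cross the boundary of the blocks. -/
theorem stmt_16 {α : Type*} [Fintype α] (f : α → α → α → α)
    (hcons : IsConservativeOp f) (hmin : IsMinorityOp f)
    (n : ℕ) (A : Fin n → Set α) (a b : Fin n → α)
    (haA : ∀ i, a i ∈ A i) (hbA : ∀ i, b i ∈ A i) (hab : ∀ i, a i ≠ b i)
    (hSI : ∀ i, IsSIOn f (A i))
    (hblock : ∀ (i : Fin n) (μ : α → α → Prop), IsAtomicCongOn f (A i) μ →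
        μ (a i) (b i) ∧ ∀ x, μ (a i) x → x = a i ∨ x = b i)
    (R : Set (Fin n → α))
    (hdom : ∀ t ∈ R, ∀ i, t i ∈ A i)
    (hinv : PreservesSet f R)
    (hfun : ∀ t ∈ R, ∀ t' ∈ R, ∀ i : Fin n,
        (∀ j, j ≠ i → t j = t' j) → t = t')
    (ℓ : Fin n → α → ZMod 2)
    (hℓ : ∀ i, ℓ i (a i) ≠ ℓ i (b i))
    (hlin : ∀ t : Fin n → α, (∀ i, t i = a i ∨ t i = b i) →
        (t ∈ R ↔ (∑ i, ℓ i (t i)) = 1)) :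
    ∀ t ∈ R, (∃ i, t i = a i ∨ t i = b i) →
      ∀ j : Fin n, t j = a j ∨ t j = b j :=
  stmt_16_general f hcons hmin n a b hab R hinv hfun ℓ hℓ hlin
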